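/- arXiv:1506.07000 — 3 statements merged into one kernel-verified Lean document; each statement's English description precedes it below -/
import Mathlib

section
/- For every zone Z over a finite set X of clocks, the time-elapse set {v + δ | v ∈ Z, δ ∈ ℝ≥0} (where v + δ is the valuation mapping each clock x to v(x) + δ) is again a zone over X. -/
/-- The five comparison operators `<, ≤, =, ≥, >`. -/
inductive CmpOp where
  | lt | le | eq | ge | gt

/-- Interpretation of a comparison operator over the reals. -/
def CmpOp.holds : CmpOp → ℝ → ℝ → Prop
  | .lt, a, b => a < b
  | .le, a, b => a ≤ b
  | .eq, a, b => a = b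
  | .ge, a, b => a ≥ b
  | .gt, a, b => a > b

/-- A valuation over the set of clocks `X` assigns a nonnegative real to each clock. -/
abbrev Val (X : Type) := X → NNReal

/-- Atomic zone constraints: `x # c` or `x - y # c` with `c : ℤ`. -/
inductive ZoneAtom (X : Type) where
  | single (x : X) (r : CmpOp) (c : ℤ)
  | diff (x y : X) (r : CmpOp) (c : ℤ)

/-- Satisfaction of an atomic zone constraint, differences taken in `ℝ`. -/
def ZoneAtom.sat {X : Type} (v : Val X) : ZoneAtom X → Prop
  | .single x r c => r.holds (v x : ℝ) (c : ℝ)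
  | .diff x y r c => r.holds ((v x : ℝ) - (v y : ℝ)) (c : ℝ)

/-- A zone over `X` is a set of valuations described by a finite conjunction of
atomic zone constraints. -/
def IsZone {X : Type} (Z : Set (Val X)) : Prop :=
  ∃ φ : List (ZoneAtom X), Z = { v | ∀ a ∈ φ, a.sat v }

/-- An atomic clock constraint `x # c` with `c : ℕ`. -/
structure ClockAtom (X : Type) where
  x : X
  r : CmpOp
  c : ℕ

/-- A clock constraint is a finite conjunction of atomic clock constraints. -/
abbrev ClockConstraint (X : Type) := List (ClockAtom X)

/-- A valuation satisfies a clock constraint when it satisfies every conjunct. -/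
def ClockConstraint.sat {X : Type} (v : Val X) (g : ClockConstraint X) : Prop :=
  ∀ a ∈ g, a.r.holds (v a.x : ℝ) (a.c : ℝ)

/- `[R]v`: reset the clocks in `R` to `0`, leave the others unchanged. -/
open Classical in
noncomputable def resetVal {X : Type} (R : Set X) (v : Val X) : Val X :=
  fun x => if x ∈ R then 0 else v x

/-!
`w` lies in the time-elapse of the zone of `φ` iff `w - d` satisfies `φ` for some real
`0 ≤ d ≤ min_x w x`. Difference constraints are invariant under the shift, and every single
constraint on `w - d`, as well as the side conditions, is a lower or upper bound on `d` by a
clock value (or `0`) minus an integer. By Helly's theorem on the line, such a finite family of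
half-lines has a common point iff any two of them meet, and a lower bound `t - c ≺ d` meets an
upper bound `d ≺ w x - c'` iff `t - w x ≺ c - c'`, which is again a zone constraint on `w`.
-/

open Set

theorem Real.nonempty_biInter_of_pairwise_inter {ι : Type*} {F : ι → Set ℝ} {s : Finset ι}
    (hF : ∀ i ∈ s, Convex ℝ (F i)) (h : ∀ i ∈ s, ∀ j ∈ s, (F i ∩ F j).Nonempty) :
    (⋂ i ∈ s, F i).Nonempty := by
  classical
  refine Convex.helly_theorem' hF fun I hIs hI => ?_
  rw [Module.finrank_self] at hI
  obtain hI | hI | hI : I.card = 0 ∨ I.card = 1 ∨ I.card = 2 := by omega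
  · simp [Finset.card_eq_zero.mp hI]
  · obtain ⟨i, rfl⟩ := Finset.card_eq_one.mp hI
    simpa using h i (hIs (by simp)) i (hIs (by simp))
  · obtain ⟨i, j, -, rfl⟩ := Finset.card_eq_two.mp hI
    simpa using h i (hIs (by simp)) j (hIs (by simp))

def halfLineAbove (a : ℝ) (strict : Bool) : Set ℝ := if strict then Ioi a else Ici a

def halfLineBelow (b : ℝ) (strict : Bool) : Set ℝ := if strict then Iio b else Iic b

lemma convex_halfLineAbove (a : ℝ) (s : Bool) : Convex ℝ (halfLineAbove a s) := by
  cases s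
  exacts [convex_Ici a, convex_Ioi a]

lemma convex_halfLineBelow (b : ℝ) (s : Bool) : Convex ℝ (halfLineBelow b s) := by
  cases s
  exacts [convex_Iic b, convex_Iio b]

lemma halfLineAbove_inter_halfLineBelow_nonempty_iff (a b : ℝ) (s s' : Bool) :
    (halfLineAbove a s ∩ halfLineBelow b s').Nonempty ↔ if s || s' then a < b else a ≤ b := by
  cases s <;> cases s' <;>
    simp [halfLineAbove, halfLineBelow, Ioi_inter_Iio, Ici_inter_Iic, Ici_inter_Iio, Ioi_inter_Iic]

lemma halfLineAbove_inter_halfLineAbove_nonempty (a a' : ℝ) (s s' : Bool) :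
    (halfLineAbove a s ∩ halfLineAbove a' s').Nonempty := by
  refine ⟨max a a' + 1, ?_, ?_⟩ <;> cases s <;> cases s' <;>
    simp only [halfLineAbove] <;> simp <;> linarith [le_max_left a a', le_max_right a a']

lemma halfLineBelow_inter_halfLineBelow_nonempty (b b' : ℝ) (s s' : Bool) :
    (halfLineBelow b s ∩ halfLineBelow b' s').Nonempty := by
  refine ⟨min b b' - 1, ?_, ?_⟩ <;> cases s <;> cases s' <;>
    simp only [halfLineBelow] <;> simp <;> linarith [min_le_left b b', min_le_right b b']

/-- A bound on a delay `d`, read against a valuation `w`: `lower t c s` says `t - c < d`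
(`≤` unless `s`), where `t` is the value of a clock or, for `t = none`, the constant `0`;
`upper x c s` says `d < w x - c` (`≤` unless `s`). -/
inductive DelayBound (X : Type) where
  | lower (t : Option X) (c : ℤ) (strict : Bool)
  | upper (x : X) (c : ℤ) (strict : Bool)

namespace DelayBound

variable {X : Type}

def clockValue (w : Val X) : Option X → ℝ
  | none => 0
  | some x => w x

def set (w : Val X) : DelayBound X → Set ℝ
  | lower t c s => halfLineAbove (clockValue w t - c) s
  | upper x c s => halfLineBelow ((w x : ℝ) - c) s

lemma convex_set (w : Val X) (b : DelayBound X) : Convex ℝ (b.set w) := by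
  cases b
  exacts [convex_halfLineAbove _ _, convex_halfLineBelow _ _]

def lowerUpperAtom : Option X → ℤ → X → ℤ → Bool → ZoneAtom X
  | none, c, x, c', s => .single x (if s then .gt else .ge) (c' - c)
  | some y, c, x, c', s => .diff y x (if s then .lt else .le) (c - c')

lemma sat_lowerUpperAtom_iff (w : Val X) (t : Option X) (c : ℤ) (x : X) (c' : ℤ) (s : Bool) :
    (lowerUpperAtom t c x c' s).sat w ↔
      if s then clockValue w t - c < w x - c' else clockValue w t - c ≤ w x - c' := by
  cases t <;> cases s <;> simp [lowerUpperAtom, ZoneAtom.sat, CmpOp.holds, clockValue] <;>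
    constructor <;> intro <;> linarith

def compatAtoms : DelayBound X → DelayBound X → List (ZoneAtom X)
  | lower t c s, upper x c' s' => [lowerUpperAtom t c x c' (s || s')]
  | upper x c' s', lower t c s => [lowerUpperAtom t c x c' (s || s')]
  | _, _ => []

lemma inter_set_nonempty_iff (w : Val X) (b₁ b₂ : DelayBound X) :
    (b₁.set w ∩ b₂.set w).Nonempty ↔ ∀ a ∈ compatAtoms b₁ b₂, a.sat w := by
  cases b₁ <;> cases b₂ <;> simp only [set, compatAtoms, List.mem_cons, List.not_mem_nil,
    forall_eq_or_imp, IsEmpty.forall_iff, implies_true, and_true,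
    sat_lowerUpperAtom_iff, halfLineAbove_inter_halfLineAbove_nonempty,
    halfLineBelow_inter_halfLineBelow_nonempty, halfLineAbove_inter_halfLineBelow_nonempty_iff]
  rw [inter_comm, halfLineAbove_inter_halfLineBelow_nonempty_iff]

lemma exists_forall_mem_set_iff (w : Val X) (B : List (DelayBound X)) :
    (∃ d, ∀ b ∈ B, d ∈ b.set w) ↔ ∀ b₁ ∈ B, ∀ b₂ ∈ B, ∀ a ∈ compatAtoms b₁ b₂, a.sat w := by
  classical
  refine ⟨fun ⟨d, hd⟩ b₁ h₁ b₂ h₂ => (inter_set_nonempty_iff w b₁ b₂).1 ⟨d, hd b₁ h₁, hd b₂ h₂⟩,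
    fun h => ?_⟩
  obtain ⟨d, hd⟩ := Real.nonempty_biInter_of_pairwise_inter (s := B.toFinset)
    (fun b _ => convex_set w b) fun b₁ h₁ b₂ h₂ =>
      (inter_set_nonempty_iff w b₁ b₂).2 (h b₁ (List.mem_toFinset.1 h₁) b₂ (List.mem_toFinset.1 h₂))
  simp only [mem_iInter, List.mem_toFinset] at hd
  exact ⟨d, hd⟩

end DelayBound

namespace ZoneAtom

variable {X : Type}

def delayBounds : ZoneAtom X → List (DelayBound X)
  | single x .lt c => [.lower (some x) c true]
  | single x .le c => [.lower (some x) c false]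
  | single x .eq c => [.lower (some x) c false, .upper x c false]
  | single x .ge c => [.upper x c false]
  | single x .gt c => [.upper x c true]
  | diff .. => []

def diffPart : ZoneAtom X → List (ZoneAtom X)
  | single .. => []
  | diff x y r c => [diff x y r c]

lemma sat_iff_of_eq_sub {v w : Val X} {d : ℝ} (h : ∀ x, (v x : ℝ) = w x - d) (a : ZoneAtom X) :
    a.sat v ↔ (∀ b ∈ a.diffPart, b.sat w) ∧ ∀ b ∈ a.delayBounds, d ∈ b.set w := by
  cases a with
  | single x r c =>
    cases r <;> simp [sat, CmpOp.holds, diffPart, delayBounds, DelayBound.set,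
      DelayBound.clockValue, halfLineAbove, halfLineBelow, h x] <;> grind
  | diff x y r c => simp [sat, diffPart, delayBounds, h x, h y]

end ZoneAtom

noncomputable def elapseBounds {X : Type} [Fintype X] (φ : List (ZoneAtom X)) :
    List (DelayBound X) :=
  .lower none 0 false :: (Finset.univ.toList.map fun x => .upper x 0 false) ++
    φ.flatMap ZoneAtom.delayBounds

lemma exists_sat_and_eq_add_iff {X : Type} [Fintype X] (φ : List (ZoneAtom X)) (w : Val X) :
    (∃ v, (∀ a ∈ φ, a.sat v) ∧ ∃ δ : NNReal, w = fun x => v x + δ) ↔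
      (∀ a ∈ φ, ∀ b ∈ a.diffPart, b.sat w) ∧ ∃ d, ∀ b ∈ elapseBounds φ, d ∈ b.set w := by
  have hset (d : ℝ) : (d ∈ (DelayBound.lower none 0 false).set w ↔ 0 ≤ d) ∧
      ∀ x, (d ∈ (DelayBound.upper x 0 false).set w ↔ d ≤ w x) := by
    simp [DelayBound.set, DelayBound.clockValue, halfLineAbove, halfLineBelow]
  simp only [elapseBounds, List.forall_mem_cons, List.forall_mem_append, List.forall_mem_map,
    List.forall_mem_flatMap, Finset.mem_toList, Finset.mem_univ, forall_const, hset]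
  constructor
  · rintro ⟨v, hv, δ, rfl⟩
    have hsub (x : X) : (v x : ℝ) = ((v x + δ : NNReal) : ℝ) - δ := by push_cast; ring
    have hsat a ha := (ZoneAtom.sat_iff_of_eq_sub hsub a).1 (hv a ha)
    refine ⟨fun a ha => (hsat a ha).1, δ, ⟨δ.2, fun x => ?_⟩, fun a ha => (hsat a ha).2⟩
    simp
  · rintro ⟨hdiff, d, ⟨hd0, hdw⟩, hd⟩
    let v : Val X := fun x => ⟨w x - d, sub_nonneg.2 (hdw x)⟩
    refine ⟨v, fun a ha => (ZoneAtom.sat_iff_of_eq_sub (fun x => rfl) a).2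
      ⟨hdiff a ha, hd a ha⟩, ⟨d, hd0⟩, funext fun x => NNReal.eq (sub_add_cancel _ d).symm⟩

/-- the time-elapse set of a zone is a zone. -/
theorem isZone_timeElapse {X : Type} [Fintype X] (Z : Set (Val X))
    (hZ : IsZone Z) :
    IsZone { w : Val X | ∃ v ∈ Z, ∃ δ : NNReal, w = fun x => v x + δ } := by
  obtain ⟨φ, rfl⟩ := hZ
  refine ⟨(φ.flatMap ZoneAtom.diffPart) ++
    (elapseBounds φ).flatMap fun b₁ => (elapseBounds φ).flatMap (DelayBound.compatAtoms b₁), ?_⟩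
  ext w
  simp only [mem_ofPred_eq, List.forall_mem_append, List.forall_mem_flatMap]
  rw [exists_sat_and_eq_add_iff, DelayBound.exists_forall_mem_set_iff]
end

section
/- Zone successors are well-defined: for every zone Z over a finite set X of clocks, every clock constraint g over X, and every R ⊆ X, the set Z' = { [R]v + δ | v ∈ Z, v ⊨ g, δ ∈ ℝ≥0 } is again a zone over X. In other words, the symbolic successor of a zone along a timed-automaton transition (guard intersection, followed by reset, followed by time elapse) is a zone. -/
/-! Zones are exactly the sets of valuations cut out by finite systems of difference bounds
`x - y < c` / `x - y ≤ c` on real valuations (with `0` allowed as a term). Such systems are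
closed under intersection, under substitutions of the form `x ↦ t(x) - t₀` (which preserve all
differences), and under projecting out a variable: by Fourier–Motzkin elimination, a value for
`t` exists iff every lower bound on `t` lies below every upper bound, strictness included.
The successor is then a composition of zone operations: intersecting with the guard; resetting
the clocks of `R` one at a time (project out the old value of the clock, pin the new one to `0`);
and letting time elapse (project out the delay `δ` from `w - δ ∈ Z`, `0 ≤ δ`, `δ ≤ w`). -/

section LexBounds

variable {a b : ℝ} {s s' : Bool}

lemma toLex_le_toLex_false_iff :
    toLex (a, s) ≤ toLex (b, false) ↔ if s then a < b else a ≤ b := by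
  rw [Prod.Lex.toLex_le_toLex]
  cases s <;> simp [le_iff_lt_or_eq]

lemma toLex_true_le_toLex_not_iff :
    toLex (a, true) ≤ toLex (b, !s) ↔ if s then a < b else a ≤ b := by
  rw [Prod.Lex.toLex_le_toLex]
  cases s <;> simp [le_iff_lt_or_eq]

lemma toLex_lt_toLex_not_iff :
    toLex (a, s) < toLex (b, !s') ↔ if s || s' then a < b else a ≤ b := by
  rw [Prod.Lex.toLex_lt_toLex]
  cases s <;> cases s' <;> simp [le_iff_lt_or_eq]

lemma toLex_false_lt_toLex_true (t : ℝ) : toLex (t, false) < toLex (t, true) :=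
  Prod.Lex.toLex_lt_toLex.2 (.inr ⟨rfl, Bool.false_lt_true⟩)

theorem exists_real_between {k k' : ℝ ×ₗ Bool} (h : k < k') :
    ∃ t : ℝ, k ≤ toLex (t, false) ∧ toLex (t, true) ≤ k' := by
  rcases Prod.Lex.lt_iff.1 h with hlt | ⟨heq, hs⟩
  · refine ⟨((ofLex k).1 + (ofLex k').1) / 2, Prod.Lex.le_iff.2 (.inl ?_),
      Prod.Lex.le_iff.2 (.inl ?_)⟩ <;> simp <;> linarith
  · refine ⟨(ofLex k).1, Prod.Lex.le_iff.2 (.inr ⟨rfl, ?_⟩), Prod.Lex.le_iff.2 (.inr ⟨heq, ?_⟩)⟩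
    · revert hs; cases (ofLex k).2 <;> simp
    · revert hs; cases (ofLex k').2 <;> simp

theorem Finset.exists_real_between (A B : Finset (ℝ ×ₗ Bool)) (h : ∀ a ∈ A, ∀ b ∈ B, a < b) :
    ∃ t : ℝ, (∀ a ∈ A, a ≤ toLex (t, false)) ∧ ∀ b ∈ B, toLex (t, true) ≤ b := by
  obtain ⟨k, k', hkk', hA, hB⟩ : ∃ k k', k < k' ∧ (∀ a ∈ A, a ≤ k) ∧ ∀ b ∈ B, k' ≤ b := by
    rcases A.eq_empty_or_nonempty with rfl | hA <;> rcases B.eq_empty_or_nonempty with rfl | hB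
    · obtain ⟨k', hk⟩ := exists_gt (toLex ((0 : ℝ), false))
      exact ⟨_, k', hk, by simp, by simp⟩
    · obtain ⟨k, hk⟩ := exists_lt (B.min' hB)
      exact ⟨k, _, hk, by simp, fun b => B.min'_le b⟩
    · obtain ⟨k', hk⟩ := exists_gt (A.max' hA)
      exact ⟨_, k', hk, fun a => A.le_max' a, by simp⟩
    · exact ⟨_, _, h _ (A.max'_mem hA) _ (B.min'_mem hB), fun a => A.le_max' a,
        fun b => B.min'_le b⟩
  obtain ⟨t, ht, ht'⟩ := _root_.exists_real_between hkk'
  exact ⟨t, fun a ha => (hA a ha).trans ht, fun b hb => ht'.trans (hB b hb)⟩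

end LexBounds

/-- The bound `x - y < c` (if `strict`) or `x - y ≤ c`; the term `none` is the constant `0`. -/
structure DiffBound (Y : Type*) where
  x : Option Y
  y : Option Y
  strict : Bool
  c : ℤ

namespace DiffBound

variable {Y Y' : Type*}

def sat (v : Y → ℝ) (b : DiffBound Y) : Prop :=
  if b.strict then b.x.elim' 0 v - b.y.elim' 0 v < b.c else b.x.elim' 0 v - b.y.elim' 0 v ≤ b.c

def map (s : Option Y → Option Y') (b : DiffBound Y) : DiffBound Y' :=
  ⟨s b.x, s b.y, b.strict, b.c⟩

/-- The valuation read off `w` through the substitution `s`, measured from the origin `s none`. -/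
def subst (s : Option Y → Option Y') (w : Y' → ℝ) (y : Y) : ℝ :=
  (s (some y)).elim' 0 w - (s none).elim' 0 w

lemma elim'_subst (s : Option Y → Option Y') (w : Y' → ℝ) (o : Option Y) :
    o.elim' 0 (subst s w) = (s o).elim' 0 w - (s none).elim' 0 w := by
  cases o <;> simp [subst]

lemma sat_map (s : Option Y → Option Y') (w : Y' → ℝ) (b : DiffBound Y) :
    (b.map s).sat w ↔ b.sat (subst s w) := by
  simp only [sat, map, elim'_subst, sub_sub_sub_cancel_right]
  rfl

section Elimination

def IsLower (b : DiffBound (Option Y)) : Prop := b.y = some none ∧ b.x ≠ some none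

def IsUpper (b : DiffBound (Option Y)) : Prop := b.x = some none ∧ b.y ≠ some none

instance [DecidableEq Y] : DecidablePred (IsLower (Y := Y)) :=
  fun _ => inferInstanceAs (Decidable (_ ∧ _))

instance [DecidableEq Y] : DecidablePred (IsUpper (Y := Y)) :=
  fun _ => inferInstanceAs (Decidable (_ ∧ _))

def collapse (b : DiffBound (Option Y)) : DiffBound Y := ⟨b.x.join, b.y.join, b.strict, b.c⟩

/-- From `x - t ≺ c` and `t - y ≺' c'` derive `x - y ≺'' c + c'`. -/
def trans (l u : DiffBound (Option Y)) : DiffBound Y :=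
  ⟨l.x.join, u.y.join, l.strict || u.strict, l.c + u.c⟩

/-- Fourier–Motzkin elimination of the variable `none : Option Y` (the term `some none`). -/
def eliminate [DecidableEq Y] (φ : List (DiffBound (Option Y))) : List (DiffBound Y) :=
  (φ.filter fun b => ¬IsLower b ∧ ¬IsUpper b).map collapse ++
    (φ.filter (IsLower ·)).flatMap fun l => (φ.filter (IsUpper ·)).map (trans l)

/-- A lower bound `a < t` or `a ≤ t` on the eliminated variable is encoded in `ℝ ×ₗ Bool` so that
the tightest of finitely many bounds is the largest key; dually for `upperKey`. -/
def lowerKey (v : Y → ℝ) (l : DiffBound (Option Y)) : ℝ ×ₗ Bool :=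
  toLex (l.x.join.elim' 0 v - l.c, l.strict)

def upperKey (v : Y → ℝ) (u : DiffBound (Option Y)) : ℝ ×ₗ Bool :=
  toLex (u.y.join.elim' 0 v + u.c, !u.strict)

variable {v : Y → ℝ} {t : ℝ}

lemma elim'_elim'_of_ne {o : Option (Option Y)} (h : o ≠ some none) :
    o.elim' 0 (Option.elim' t v) = o.join.elim' 0 v := by
  rcases o with _ | _ | y <;> simp_all

lemma sat_iff_collapse {b : DiffBound (Option Y)} (hl : ¬IsLower b) (hu : ¬IsUpper b) :
    b.sat (Option.elim' t v) ↔ (collapse b).sat v := by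
  obtain ⟨x, y, s, c⟩ := b
  simp only [IsLower, IsUpper, not_and, not_not] at hl hu
  by_cases hx : x = some none
  · obtain rfl := hu hx
    simp [sat, collapse, hx]
  · by_cases hy : y = some none
    · exact absurd (hl hy) hx
    · simp [sat, collapse, elim'_elim'_of_ne hx, elim'_elim'_of_ne hy]

lemma sat_iff_lowerKey_le {l : DiffBound (Option Y)} (hl : IsLower l) :
    l.sat (Option.elim' t v) ↔ lowerKey v l ≤ toLex (t, false) := by
  obtain ⟨x, y, s, c⟩ := l
  obtain ⟨rfl, hx⟩ := hl
  simp only [sat, lowerKey, toLex_le_toLex_false_iff, elim'_elim'_of_ne hx, Option.elim'_some,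
    Option.elim'_none]
  split_ifs <;> constructor <;> intro <;> linarith

lemma sat_iff_le_upperKey {u : DiffBound (Option Y)} (hu : IsUpper u) :
    u.sat (Option.elim' t v) ↔ toLex (t, true) ≤ upperKey v u := by
  obtain ⟨x, y, s, c⟩ := u
  obtain ⟨rfl, hy⟩ := hu
  simp only [sat, upperKey, toLex_true_le_toLex_not_iff, elim'_elim'_of_ne hy, Option.elim'_some,
    Option.elim'_none]
  split_ifs <;> constructor <;> intro <;> linarith

lemma sat_trans_iff (l u : DiffBound (Option Y)) :
    (trans l u).sat v ↔ lowerKey v l < upperKey v u := by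
  simp only [sat, trans, lowerKey, upperKey, toLex_lt_toLex_not_iff]
  push_cast
  split_ifs <;> constructor <;> intro <;> linarith

theorem forall_sat_eliminate_iff [DecidableEq Y] (φ : List (DiffBound (Option Y))) (v : Y → ℝ) :
    (∀ b ∈ eliminate φ, b.sat v) ↔ ∃ t, ∀ b ∈ φ, b.sat (Option.elim' t v) := by
  constructor
  · intro h
    obtain ⟨t, hlow, hup⟩ := Finset.exists_real_between
      ((φ.filter (IsLower ·)).map (lowerKey v)).toFinset
      ((φ.filter (IsUpper ·)).map (upperKey v)).toFinset (by
        simp only [List.mem_toFinset, List.mem_map]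
        rintro _ ⟨l, hl, rfl⟩ _ ⟨u, hu, rfl⟩
        exact (sat_trans_iff l u).1 (h _ (List.mem_append_right _
          (List.mem_flatMap.2 ⟨l, hl, List.mem_map_of_mem hu⟩))))
    refine ⟨t, fun b hb => ?_⟩
    by_cases hl : IsLower b
    · exact (sat_iff_lowerKey_le hl).2 (hlow _
        (List.mem_toFinset.2 (List.mem_map_of_mem (List.mem_filter.2 ⟨hb, decide_eq_true hl⟩))))
    by_cases hu : IsUpper b
    · exact (sat_iff_le_upperKey hu).2 (hup _
        (List.mem_toFinset.2 (List.mem_map_of_mem (List.mem_filter.2 ⟨hb, decide_eq_true hu⟩))))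
    exact (sat_iff_collapse hl hu).2 (h _ (List.mem_append_left _
      (List.mem_map_of_mem (List.mem_filter.2 ⟨hb, decide_eq_true ⟨hl, hu⟩⟩))))
  · rintro ⟨t, ht⟩ b hb
    simp only [eliminate, List.mem_append, List.mem_map, List.mem_flatMap, List.mem_filter,
      decide_eq_true_eq] at hb
    rcases hb with ⟨b, ⟨hb, hl, hu⟩, rfl⟩ | ⟨l, ⟨hl, hlow⟩, u, ⟨hu, hup⟩, rfl⟩
    · exact (sat_iff_collapse hl hu).1 (ht b hb)
    · refine (sat_trans_iff l u).2 ?_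
      calc lowerKey v l ≤ toLex (t, false) := (sat_iff_lowerKey_le hlow).1 (ht l hl)
        _ < toLex (t, true) := toLex_false_lt_toLex_true t
        _ ≤ upperKey v u := (sat_iff_le_upperKey hup).1 (ht u hu)

end Elimination

end DiffBound

def IsDiffSet {Y : Type*} (S : Set (Y → ℝ)) : Prop :=
  ∃ φ : List (DiffBound Y), S = {v | ∀ b ∈ φ, b.sat v}

lemma isDiffSet_setOf_nonneg {Y : Type*} (y : Y) : IsDiffSet {v : Y → ℝ | 0 ≤ v y} :=
  ⟨[⟨none, some y, false, 0⟩], by ext; simp [DiffBound.sat]⟩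

lemma isDiffSet_setOf_eq_zero {Y : Type*} (y : Y) : IsDiffSet {v : Y → ℝ | v y = 0} :=
  ⟨[⟨some y, none, false, 0⟩, ⟨none, some y, false, 0⟩], by
    ext; simp [DiffBound.sat, ← le_antisymm_iff]⟩

namespace IsDiffSet

variable {Y Y' : Type*} {S T : Set (Y → ℝ)}

lemma inter (hS : IsDiffSet S) (hT : IsDiffSet T) : IsDiffSet (S ∩ T) := by
  obtain ⟨φ, rfl⟩ := hS
  obtain ⟨ψ, rfl⟩ := hT
  exact ⟨φ ++ ψ, by ext; simp [or_imp, forall_and]⟩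

lemma iInter {ι : Type*} [Finite ι] {S : ι → Set (Y → ℝ)} (hS : ∀ i, IsDiffSet (S i)) :
    IsDiffSet (⋂ i, S i) := by
  have := Fintype.ofFinite ι
  choose φ hφ using hS
  exact ⟨Finset.univ.toList.flatMap φ, by ext; simpa [hφ] using forall_comm⟩

lemma preimage_subst (hS : IsDiffSet S) (s : Option Y → Option Y') :
    IsDiffSet (DiffBound.subst s ⁻¹' S) := by
  obtain ⟨φ, rfl⟩ := hS
  exact ⟨φ.map (DiffBound.map s), by ext; simp [DiffBound.sat_map]⟩

lemma exists_elim' {S : Set (Option Y → ℝ)} (hS : IsDiffSet S) :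
    IsDiffSet {v : Y → ℝ | ∃ t, Option.elim' t v ∈ S} := by
  classical
  obtain ⟨φ, rfl⟩ := hS
  exact ⟨DiffBound.eliminate φ, by ext; simp [DiffBound.forall_sat_eliminate_iff]⟩

lemma exists_update [DecidableEq Y] (hS : IsDiffSet S) (y₀ : Y) :
    IsDiffSet {v | ∃ t, Function.update v y₀ t ∈ S} := by
  let s : Option Y → Option (Option Y) := Option.map fun y => if y = y₀ then none else some y
  have hs (v : Y → ℝ) (t : ℝ) : DiffBound.subst s (Option.elim' t v) = Function.update v y₀ t := by
    ext y
    by_cases hy : y = y₀ <;> simp [s, DiffBound.subst, hy]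
  simpa only [Set.mem_preimage, hs] using (hS.preimage_subst s).exists_elim'

end IsDiffSet

def CmpOp.bounds {Y : Type*} (r : CmpOp) (p q : Option Y) (c : ℤ) : List (DiffBound Y) :=
  match r with
  | .lt => [⟨p, q, true, c⟩]
  | .le => [⟨p, q, false, c⟩]
  | .eq => [⟨p, q, false, c⟩, ⟨q, p, false, -c⟩]
  | .ge => [⟨q, p, false, -c⟩]
  | .gt => [⟨q, p, true, -c⟩]

lemma CmpOp.forall_sat_bounds_iff {Y : Type*} (r : CmpOp) (p q : Option Y) (c : ℤ)
    (v : Y → ℝ) :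
    (∀ b ∈ r.bounds p q c, b.sat v) ↔ r.holds (p.elim' 0 v - q.elim' 0 v) c := by
  cases r <;> simp [bounds, DiffBound.sat, CmpOp.holds]
  · rw [sub_eq_iff_eq_add, le_antisymm_iff]
  · exact le_sub_iff_add_le.symm
  · rw [lt_neg, neg_sub]

section Zones

variable {X : Type}

def toRealVal (v : Val X) : X → ℝ := NNReal.toReal ∘ v

lemma toRealVal_update [DecidableEq X] (v : Val X) (x : X) (t : NNReal) :
    toRealVal (Function.update v x t) = Function.update (toRealVal v) x (t : ℝ) :=
  Function.comp_update _ _ _ _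

def ZoneAtom.toBounds : ZoneAtom X → List (DiffBound X)
  | .single x r c => r.bounds (some x) none c
  | .diff x y r c => r.bounds (some x) (some y) c

lemma ZoneAtom.sat_iff_forall_sat_toBounds (a : ZoneAtom X) (v : Val X) :
    a.sat v ↔ ∀ b ∈ a.toBounds, b.sat (toRealVal v) := by
  cases a <;> simp [toBounds, CmpOp.forall_sat_bounds_iff, ZoneAtom.sat, toRealVal]

/-- The bound `0 ≺ c` between constants is expressed as `x₀ - x₀ ≺ c`. -/
def DiffBound.toZoneAtom (x₀ : X) : DiffBound X → ZoneAtom X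
  | ⟨some x, some y, s, c⟩ => .diff x y (if s then .lt else .le) c
  | ⟨some x, none, s, c⟩ => .single x (if s then .lt else .le) c
  | ⟨none, some y, s, c⟩ => .single y (if s then .gt else .ge) (-c)
  | ⟨none, none, s, c⟩ => .diff x₀ x₀ (if s then .lt else .le) c

lemma DiffBound.sat_toZoneAtom_iff (x₀ : X) (b : DiffBound X) (v : Val X) :
    (b.toZoneAtom x₀).sat v ↔ b.sat (toRealVal v) := by
  obtain ⟨_ | x, _ | y, s, c⟩ := b <;> cases s <;>
    simp [toZoneAtom, ZoneAtom.sat, DiffBound.sat, CmpOp.holds, toRealVal, neg_le, neg_lt]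

lemma IsZone.exists_isDiffSet {Z : Set (Val X)} (hZ : IsZone Z) :
    ∃ S, IsDiffSet S ∧ Z = toRealVal ⁻¹' S := by
  obtain ⟨φ, rfl⟩ := hZ
  exact ⟨_, ⟨φ.flatMap ZoneAtom.toBounds, rfl⟩, by
    ext
    simp only [Set.mem_preimage, Set.mem_ofPred_eq, List.forall_mem_flatMap,
      ZoneAtom.sat_iff_forall_sat_toBounds]⟩

lemma IsDiffSet.isZone_preimage [Nonempty X] {S : Set (X → ℝ)} (hS : IsDiffSet S) :
    IsZone (toRealVal ⁻¹' S) := by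
  obtain ⟨x₀⟩ := ‹Nonempty X›
  obtain ⟨φ, rfl⟩ := hS
  exact ⟨φ.map (DiffBound.toZoneAtom x₀), by ext; simp [DiffBound.sat_toZoneAtom_iff]⟩

end Zones

section ZoneOperations

variable {X : Type} {Z Z' : Set (Val X)}

lemma isZone_univ : IsZone (Set.univ : Set (Val X)) := ⟨[], by simp⟩

lemma IsZone.eq_univ_of_isEmpty [IsEmpty X] (hZ : IsZone Z) : Z = Set.univ := by
  obtain ⟨φ, rfl⟩ := hZ
  refine Set.eq_univ_of_forall fun v a _ => ?_
  cases a with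
  | single x _ _ => exact isEmptyElim x
  | diff x _ _ _ => exact isEmptyElim x

lemma IsZone.inter (hZ : IsZone Z) (hZ' : IsZone Z') : IsZone (Z ∩ Z') := by
  obtain ⟨φ, rfl⟩ := hZ
  obtain ⟨ψ, rfl⟩ := hZ'
  exact ⟨φ ++ ψ, by ext; simp [or_imp, forall_and]⟩

lemma isZone_setOf_sat (g : ClockConstraint X) : IsZone {v | ClockConstraint.sat v g} :=
  ⟨g.map fun a => .single a.x a.r a.c, by ext; simp [ClockConstraint.sat, ZoneAtom.sat]⟩

lemma IsZone.image_update_zero [DecidableEq X] (hZ : IsZone Z) (x₀ : X) :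
    IsZone ((Function.update · x₀ 0) '' Z) := by
  have : Nonempty X := ⟨x₀⟩
  obtain ⟨S, hS, rfl⟩ := hZ.exists_isDiffSet
  have key : (Function.update · x₀ 0) '' (toRealVal ⁻¹' S) = toRealVal ⁻¹'
      ({u | u x₀ = 0} ∩ {u | ∃ t, Function.update u x₀ t ∈ S ∩ {u | 0 ≤ u x₀}}) := by
    ext w
    simp only [Set.mem_image, Set.mem_preimage, Set.mem_inter_iff, Set.mem_ofPred_eq]
    constructor
    · rintro ⟨v, hv, rfl⟩
      refine ⟨by simp [toRealVal], v x₀, ?_, by simp⟩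
      rwa [toRealVal_update, Function.update_idem,
        show (v x₀ : ℝ) = toRealVal v x₀ from rfl, Function.update_eq_self]
    · rintro ⟨hw, t, hwt, ht⟩
      refine ⟨Function.update w x₀ t.toNNReal, ?_, ?_⟩
      · rwa [toRealVal_update, Real.coe_toNNReal t (by simpa using ht)]
      · rw [Function.update_idem, Function.update_eq_self_iff]
        exact (NNReal.coe_eq_zero.1 hw).symm
  rw [key]
  exact ((isDiffSet_setOf_eq_zero x₀).inter
    ((hS.inter (isDiffSet_setOf_nonneg x₀)).exists_update x₀)).isZone_preimage

lemma resetVal_empty (v : Val X) : resetVal ∅ v = v := by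
  ext x
  simp [resetVal]

lemma resetVal_insert [DecidableEq X] (R : Set X) (x : X) (v : Val X) :
    resetVal (insert x R) v = Function.update (resetVal R v) x 0 := by
  funext y
  simp only [resetVal, Function.update_apply]
  split_ifs <;> simp_all

lemma IsZone.image_resetVal [Finite X] (hZ : IsZone Z) (R : Set X) :
    IsZone (resetVal R '' Z) := by
  classical
  induction R, R.toFinite using Set.Finite.induction_on with
  | empty => simpa [funext resetVal_empty] using hZ
  | @insert x R _ _ ih =>
    simpa [funext (resetVal_insert R x), Set.image_image] using ih.image_update_zero x

def timeElapse (Z : Set (Val X)) : Set (Val X) :=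
  {w | ∃ v ∈ Z, ∃ δ : NNReal, w = fun x => v x + δ}

lemma timeElapse_univ : timeElapse (Set.univ : Set (Val X)) = Set.univ :=
  Set.eq_univ_of_forall fun w => ⟨w, trivial, 0, by simp⟩

lemma IsZone.timeElapse [Finite X] (hZ : IsZone Z) : IsZone (timeElapse Z) := by
  rcases isEmpty_or_nonempty X with _ | _
  · rw [hZ.eq_univ_of_isEmpty, timeElapse_univ]
    exact isZone_univ
  obtain ⟨S, hS, rfl⟩ := hZ.exists_isDiffSet
  -- `u none` is the delay `δ`; `subst some u = fun x => u (some x) - δ` is the valuation before it.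
  let T : Set (Option X → ℝ) :=
    {u | 0 ≤ u none} ∩ DiffBound.subst some ⁻¹' (S ∩ ⋂ x, {u | 0 ≤ u x})
  have hT : IsDiffSet T := (isDiffSet_setOf_nonneg none).inter
    ((hS.inter (IsDiffSet.iInter isDiffSet_setOf_nonneg)).preimage_subst some)
  have key : timeElapse (toRealVal ⁻¹' S) = toRealVal ⁻¹' {w | ∃ t, Option.elim' t w ∈ T} := by
    ext w
    have hw (t : ℝ) :
        DiffBound.subst some (Option.elim' t (toRealVal w)) = fun x => (w x : ℝ) - t :=
      rfl
    simp only [T, timeElapse, Set.mem_preimage, Set.mem_ofPred_eq, Set.mem_inter_iff,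
      Set.mem_iInter, Option.elim'_none, hw, sub_nonneg]
    constructor
    · rintro ⟨v, hv, δ, rfl⟩
      exact ⟨δ, δ.2, by simpa [toRealVal, Function.comp_def] using hv, fun x => by simp⟩
    · rintro ⟨t, ht, hwt, hle⟩
      refine ⟨fun x => ⟨w x - t, sub_nonneg.2 (hle x)⟩, hwt, ⟨t, ht⟩, ?_⟩
      ext x
      exact (sub_add_cancel _ t).symm
  rw [key]
  exact hT.exists_elim'.isZone_preimage

end ZoneOperations

/-- zone successors are well-defined: guard intersection, reset, then
time elapse applied to a zone yields a zone. -/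
theorem isZone_successor {X : Type} [Fintype X] (Z : Set (Val X)) (hZ : IsZone Z)
    (g : ClockConstraint X) (R : Set X) :
    IsZone { w : Val X | ∃ v ∈ Z, ClockConstraint.sat v g ∧
      ∃ δ : NNReal, w = fun x => resetVal R v x + δ } := by
  have h : { w : Val X | ∃ v ∈ Z, ClockConstraint.sat v g ∧
      ∃ δ : NNReal, w = fun x => resetVal R v x + δ } =
      timeElapse (resetVal R '' (Z ∩ {v | ClockConstraint.sat v g})) := by
    ext w
    simp [timeElapse, and_assoc]
  rw [h]
  exact ((hZ.inter (isZone_setOf_sat g)).image_resetVal R).timeElapse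
end

section
/- Completeness of abstract zone graphs: let 𝔞 be an abstraction operator on sets of valuations, i.e., a function with W ⊆ 𝔞(W) and 𝔞(𝔞(W)) = 𝔞(W) for every set W of valuations. If 𝔞 is monotone (W ⊆ W' implies 𝔞(W) ⊆ 𝔞(W')), then for every node (q, Z) reachable in the zone graph ZG(A) from (q₀, Z₀), there exists a node (q, Z'') reachable in the abstract zone graph ZG^𝔞(A) from (q₀, 𝔞(Z₀)) with Z ⊆ Z''. In particular, every run of A has a corresponding path in ZG^𝔞(A). -/
/-- A transition `(q, g, R, a, q')` of a timed automaton. -/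
structure Transition (Q X Act : Type) where
  src : Q
  guard : ClockConstraint X
  resets : Set X
  act : Act
  tgt : Q

/-- A timed automaton over states `Q`, clocks `X` and actions `Act`
(finiteness of `Q`, `X`, `Act` is imposed via `Fintype` instances where needed);
the finite set of transitions is given as a list. -/
structure TA (Q X Act : Type) where
  init : Q
  accepting : Set Q
  trans : List (Transition Q X Act)

/-- Delay transitions: `(q, v) →δ (q, v + δ)` for some `δ ∈ ℝ≥0`. -/
def DelayStep {Q X : Type} : Q × Val X → Q × Val X → Prop :=
  fun p p' => p'.1 = p.1 ∧ ∃ δ : NNReal, p'.2 = fun x => p.2 x + δ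

/-- Action transitions labelled `a`: `(q, v) →a (q', [R]v)` for some transition
`(q, g, R, a, q') ∈ T` with `v ⊨ g`. -/
def ActionStep {Q X Act : Type} (A : TA Q X Act) (a : Act) :
    Q × Val X → Q × Val X → Prop :=
  fun p p' => ∃ t ∈ A.trans, t.act = a ∧ t.src = p.1 ∧ t.tgt = p'.1 ∧
    ClockConstraint.sat p.2 t.guard ∧ p'.2 = resetVal t.resets p.2

/-- One step of the semantics of a timed automaton: a delay or an action transition. -/
def Step {Q X Act : Type} (A : TA Q X Act) : Q × Val X → Q × Val X → Prop :=
  fun p p' => DelayStep p p' ∨ ∃ a : Act, ActionStep A a p p'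

/-- The initial zone `Z₀ = { 0 + δ ∣ δ ∈ ℝ≥0 }`. -/
def initZone (X : Type) : Set (Val X) :=
  { w | ∃ δ : NNReal, w = fun _ => 0 + δ }

/-- The symbolic successor `Post(Z) = { [R]v + δ ∣ v ∈ Z, v ⊨ g, δ ∈ ℝ≥0 }`. -/
def Post {X : Type} (g : ClockConstraint X) (R : Set X) (Z : Set (Val X)) :
    Set (Val X) :=
  { w | ∃ v ∈ Z, ClockConstraint.sat v g ∧ ∃ δ : NNReal, w = fun x => resetVal R v x + δ }

/-- Edge relation of the zone graph `ZG(A)`: `(q, Z) ⇒ (q', Z')` when some transition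
`(q, g, R, a, q') ∈ T` yields the nonempty successor zone `Z'`. -/
def ZGStep {Q X Act : Type} (A : TA Q X Act) :
    Q × Set (Val X) → Q × Set (Val X) → Prop :=
  fun p p' => ∃ t ∈ A.trans, t.src = p.1 ∧ t.tgt = p'.1 ∧
    p'.2 = Post t.guard t.resets p.2 ∧ p'.2 ≠ ∅

/-- Edge relation of the abstract zone graph `ZG^𝔞(A)`:
`(q, Z) ⇒𝔞 (q', 𝔞(Z'))` whenever `𝔞(Z) = Z` and `(q, Z) ⇒ (q', Z')` in `ZG(A)`. -/
def ZGAStep {Q X Act : Type} (A : TA Q X Act)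
    (abs : Set (Val X) → Set (Val X)) :
    Q × Set (Val X) → Q × Set (Val X) → Prop :=
  fun p p' => abs p.2 = p.2 ∧
    ∃ Z' : Set (Val X), ZGStep A p (p'.1, Z') ∧ p'.2 = abs Z'

/-- completeness of abstract zone graphs: for a monotone abstraction
operator `𝔞`, every node `(q, Z)` reachable in `ZG(A)` is covered by a node `(q, Z'')`
reachable in `ZG^𝔞(A)` with `Z ⊆ Z''`. -/
theorem abstractZoneGraph_complete {Q X Act : Type} [Fintype Q] [Fintype X] [Fintype Act]
    (A : TA Q X Act) (abs : Set (Val X) → Set (Val X))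
    (hext : ∀ W, W ⊆ abs W)
    (hidem : ∀ W, abs (abs W) = abs W)
    (hmono : ∀ W W', W ⊆ W' → abs W ⊆ abs W') :
    ∀ q (Z : Set (Val X)),
      Relation.ReflTransGen (ZGStep A) (A.init, initZone X) (q, Z) →
      ∃ Z'' : Set (Val X),
        Relation.ReflTransGen (ZGAStep A abs) (A.init, abs (initZone X)) (q, Z'') ∧
        Z ⊆ Z'' := by
  have post_mono : ∀ (g : ClockConstraint X) (R : Set X) (W W' : Set (Val X)),
      W ⊆ W' → Post g R W ⊆ Post g R W' := by
    rintro g R W W' hWW w ⟨v, hv, hg, δ, hw⟩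
    exact ⟨v, hWW hv, hg, δ, hw⟩
  suffices h' : ∀ p : Q × Set (Val X),
      Relation.ReflTransGen (ZGStep A) (A.init, initZone X) p →
      ∃ Z'' : Set (Val X),
      Relation.ReflTransGen (ZGAStep A abs) (A.init, abs (initZone X)) (p.1, Z'') ∧
      p.2 ⊆ Z'' ∧ abs Z'' = Z'' by
    intro q Z h
    obtain ⟨Z'', h1, h2, _⟩ := h' (q, Z) h
    exact ⟨Z'', h1, h2⟩
  intro p h
  induction h with
  | refl => exact ⟨abs (initZone X), Relation.ReflTransGen.refl, hext _, hidem _⟩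
  | tail hsteps hstep ih =>
    rename_i p c
    obtain ⟨Z₁, hreach, hsub, hfix⟩ := ih
    obtain ⟨t, ht, hsrc, htgt, hpost, hne⟩ := hstep
    refine ⟨abs (Post t.guard t.resets Z₁), ?_, ?_, hidem _⟩
    · refine hreach.tail ?_
      refine ⟨hfix, Post t.guard t.resets Z₁, ⟨t, ht, hsrc, htgt, rfl, ?_⟩, rfl⟩
      intro hempty
      apply hne
      rw [hpost]
      exact Set.subset_eq_empty (hempty ▸ post_mono _ _ _ _ hsub) rfl
    · rw [hpost]
      exact (post_mono _ _ _ _ hsub).trans (hext _)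
end
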